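/- arXiv:1701.05674 — 9 statements merged into one kernel-verified Lean document; each statement's English description precedes it below -/
import Mathlib

section
/- Let 0 < β ≤ α and let â = (â[i₁], …, â[i_m]) be an α-RS with all entries strictly positive. Let θ be a real number with θ ≥ â[i₁], and let v be the largest index with â[i_v] ≤ θ. Then either v equals the largest index w with â[i_w] ≤ (1+β)^⌈log_{1+β} θ⌉, or v equals the largest index w with â[i_w] ≤ (1+β)^⌊log_{1+β} θ⌋. -/
/-!
Let `b = 1 + β`, `L = b ^ ⌊log_b θ⌋` and `U = b ^ ⌈log_b θ⌉`, so that `L ≤ θ ≤ U ≤ b L`.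
If `a v ≤ L`, then `v` is also the last position below `L`. Otherwise `a v > L`, and every later
entry is at least `(1 + α) a v > (1 + β) L ≥ U`, so `v` is the last position below `U`.
-/

namespace Real

variable {b θ : ℝ}

theorem zpow_floor_logb_le (hb : 1 < b) (hθ : 0 < θ) : b ^ ⌊logb b θ⌋ ≤ θ := by
  rw [← rpow_intCast, ← le_logb_iff_rpow_le hb hθ]
  exact Int.floor_le _

theorem le_zpow_ceil_logb (hb : 1 < b) (hθ : 0 < θ) : θ ≤ b ^ ⌈logb b θ⌉ := by
  rw [← rpow_intCast, ← logb_le_iff_le_rpow hb hθ]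
  exact Int.le_ceil _

theorem zpow_ceil_logb_le_mul_zpow_floor_logb (hb : 1 < b) :
    b ^ ⌈logb b θ⌉ ≤ b * b ^ ⌊logb b θ⌋ :=
  calc b ^ ⌈logb b θ⌉ ≤ b ^ (⌊logb b θ⌋ + 1) :=
        zpow_le_zpow_right₀ hb.le (Int.ceil_le_floor_add_one _)
    _ = b * b ^ ⌊logb b θ⌋ := by rw [zpow_add_one₀ (by positivity), mul_comm]

end Real

/-- `v` is the last of the positions `0, …, m - 1` with entry at most `t`; `v < m` is not
required. -/
def IsLastLE (a : ℕ → ℝ) (m : ℕ) (t : ℝ) (v : ℕ) : Prop :=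
  a v ≤ t ∧ ∀ w, w < m → a w ≤ t → w ≤ v

namespace IsLastLE

variable {a : ℕ → ℝ} {m v : ℕ} {s t : ℝ}

theorem of_le_of_le (h : IsLastLE a m t v) (hs : a v ≤ s) (hst : s ≤ t) : IsLastLE a m s v :=
  ⟨hs, fun w hw hws => h.2 w hw (hws.trans hst)⟩

theorem of_le_of_lt_later (h : IsLastLE a m t v) (hts : t ≤ s)
    (hlater : ∀ w, v < w → w < m → s < a w) : IsLastLE a m s v :=
  ⟨h.1.trans hts, fun w hw hws => not_lt.mp fun hvw => (hlater w hvw hw).not_ge hws⟩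

end IsLastLE

theorem one_add_mul_le_of_lt {α : ℝ} {m : ℕ} {a : ℕ → ℝ} (hα : 0 ≤ α)
    (hpos : ∀ i, i < m → 0 < a i) (hRS : ∀ i, i + 1 < m → (1 + α) * a i ≤ a (i + 1))
    {v w : ℕ} (hvw : v < w) (hw : w < m) : (1 + α) * a v ≤ a w := by
  induction w, hvw using Nat.le_induction with
  | base => exact hRS v hw
  | succ k hvk ih =>
    have hk : k < m := by omega
    have hk_le : a k ≤ (1 + α) * a k := le_mul_of_one_le_left (hpos k hk).le (by linarith)
    exact (ih hk).trans (hk_le.trans (hRS k hw))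

theorem stmt1_general (α β : ℝ) (hβ : 0 < β) (hβα : β ≤ α)
    (m : ℕ) (a : ℕ → ℝ)
    (hpos : ∀ i, i < m → 0 < a i)
    (hRS : ∀ i, i + 1 < m → (1 + α) * a i ≤ a (i + 1))
    (θ : ℝ)
    (v : ℕ) (hv : v < m) (hva : a v ≤ θ)
    (hvmax : ∀ w, w < m → a w ≤ θ → w ≤ v) :
    (a v ≤ (1 + β) ^ ⌈Real.logb (1 + β) θ⌉ ∧
      ∀ w, w < m → a w ≤ (1 + β) ^ ⌈Real.logb (1 + β) θ⌉ → w ≤ v) ∨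
    (a v ≤ (1 + β) ^ ⌊Real.logb (1 + β) θ⌋ ∧
      ∀ w, w < m → a w ≤ (1 + β) ^ ⌊Real.logb (1 + β) θ⌋ → w ≤ v) := by
  have hb : 1 < 1 + β := by linarith
  have hθ : 0 < θ := (hpos v hv).trans_le hva
  have hlast : IsLastLE a m θ v := ⟨hva, hvmax⟩
  by_cases hvL : a v ≤ (1 + β) ^ ⌊Real.logb (1 + β) θ⌋
  · exact Or.inr (hlast.of_le_of_le hvL (Real.zpow_floor_logb_le hb hθ))
  · refine Or.inl (hlast.of_le_of_lt_later (Real.le_zpow_ceil_logb hb hθ) fun w hvw hw => ?_)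
    calc (1 + β) ^ ⌈Real.logb (1 + β) θ⌉
        ≤ (1 + β) * (1 + β) ^ ⌊Real.logb (1 + β) θ⌋ :=
          Real.zpow_ceil_logb_le_mul_zpow_floor_logb hb
      _ < (1 + β) * a v := by gcongr; exact not_le.mp hvL
      _ ≤ (1 + α) * a v := by gcongr; exact (hpos v hv).le
      _ ≤ a w := one_add_mul_le_of_lt (by linarith) hpos hRS hvw hw

/-- Let `0 < β ≤ α` and let `a` (positions `0, …, m-1`) be an `α`-RS with all
entries strictly positive.  Let `θ ≥ a 0`, and let `v` be the largest position with `a v ≤ θ`.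
Then `v` is the largest position `w` with `a w ≤ (1+β)^⌈log_{1+β} θ⌉`, or `v` is the largest
position `w` with `a w ≤ (1+β)^⌊log_{1+β} θ⌋`. -/
theorem stmt1 (α β : ℝ) (hβ : 0 < β) (hβα : β ≤ α)
    (m : ℕ) (hm : 0 < m) (a : ℕ → ℝ)
    (hpos : ∀ i, i < m → 0 < a i)
    (hRS : ∀ i, i + 1 < m → (1 + α) * a i ≤ a (i + 1))
    (θ : ℝ) (hθ : a 0 ≤ θ)
    (v : ℕ) (hv : v < m) (hva : a v ≤ θ)
    (hvmax : ∀ w, w < m → a w ≤ θ → w ≤ v) :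
    (a v ≤ (1 + β) ^ ⌈Real.logb (1 + β) θ⌉ ∧
      ∀ w, w < m → a w ≤ (1 + β) ^ ⌈Real.logb (1 + β) θ⌉ → w ≤ v) ∨
    (a v ≤ (1 + β) ^ ⌊Real.logb (1 + β) θ⌋ ∧
      ∀ w, w < m → a w ≤ (1 + β) ^ ⌊Real.logb (1 + β) θ⌋ → w ≤ v) :=
  stmt1_general α β hβ hβα m a hpos hRS θ v hv hva hvmax
end

section
/- For every nondecreasing array A = (a[0], a[1], …, a[n]) of nonnegative reals and every β > 0, there exist indices 0 ≤ i₁ < i₂ < ⋯ < i_m = n such that (a[i₁], …, a[i_m]) is a β-RS and its completion A' = (a'[0], …, a'[n]) satisfies a[t] ≤ a'[t] ≤ (1+β)·a[t] for all 0 ≤ t ≤ n. -/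
/-!
Choose the indices greedily from the right, starting with `n`. If `j` has been chosen, let `f`
be the first index with `a j ≤ (1 + β) * a f`. By monotonicity every `t ∈ [f, j]` satisfies
`a t ≤ a j ≤ (1 + β) * a t`, so the completion may take the value `a j` on all of `(f - 1, j]`.
If `f = 0` we stop; otherwise `f - 1` is chosen next, and minimality of `f` gives
`(1 + β) * a (f - 1) < a j`, which is the growth condition of a `β`-representative sequence.
-/

/-- The conclusion of the theorem for the prefix `a 0, …, a j`: a `β`-RS of `a` ending at
index `j`, and its completion. -/
structure RepresentativeCover (a : ℕ → ℝ) (β : ℝ) (j : ℕ) where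
  len : ℕ
  idx : ℕ → ℕ
  completion : ℕ → ℝ
  len_pos : 0 < len
  idx_lt_succ : ∀ v, v + 1 < len → idx v < idx (v + 1)
  idx_last : idx (len - 1) = j
  growth : ∀ v, v + 1 < len → (1 + β) * a (idx v) ≤ a (idx (v + 1)) ∧ 0 ≤ (1 + β) * a (idx v)
  completion_of_le_first : ∀ t, t ≤ idx 0 → completion t = a (idx 0)
  completion_of_mem_Ioc :
    ∀ v, v + 1 < len → ∀ t, idx v < t → t ≤ idx (v + 1) → completion t = a (idx (v + 1))
  approx : ∀ t, t ≤ j → a t ≤ completion t ∧ completion t ≤ (1 + β) * a t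

namespace RepresentativeCover

variable {a : ℕ → ℝ} {β : ℝ}

theorem idx_le {j : ℕ} (c : RepresentativeCover a β j) {v : ℕ} (hv : v < c.len) :
    c.idx v ≤ j := by
  have hmono : StrictMonoOn c.idx (Set.Iio c.len) :=
    strictMonoOn_of_lt_succ Set.ordConnected_Iio fun v _ _ hv => c.idx_lt_succ v hv
  calc c.idx v ≤ c.idx (c.len - 1) :=
        hmono.monotoneOn hv (show c.len - 1 < c.len by have := c.len_pos; omega) (by omega)
    _ = j := c.idx_last

theorem idx_of_succ_eq_len {j : ℕ} (c : RepresentativeCover a β j) {v : ℕ}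
    (hv : v + 1 = c.len) : c.idx v = j := by
  obtain rfl : v = c.len - 1 := by omega
  exact c.idx_last

def single {j : ℕ} (happrox : ∀ t, t ≤ j → a t ≤ a j ∧ a j ≤ (1 + β) * a t) :
    RepresentativeCover a β j where
  len := 1
  idx := fun _ => j
  completion := fun _ => a j
  len_pos := one_pos
  idx_lt_succ := by omega
  idx_last := rfl
  growth := by omega
  completion_of_le_first := fun _ _ => rfl
  completion_of_mem_Ioc := by omega
  approx := happrox

def snoc {k j : ℕ} (c : RepresentativeCover a β k) (hkj : k < j)
    (hgrowth : (1 + β) * a k ≤ a j) (hnonneg : 0 ≤ (1 + β) * a k)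
    (happrox : ∀ t, k < t → t ≤ j → a t ≤ a j ∧ a j ≤ (1 + β) * a t) :
    RepresentativeCover a β j where
  len := c.len + 1
  idx := fun v => if v < c.len then c.idx v else j
  completion := fun t => if t ≤ k then c.completion t else a j
  len_pos := Nat.succ_pos _
  idx_lt_succ v hv := by
    have hidx := c.idx_le (v := v) (by omega)
    by_cases hlast : v + 1 < c.len
    · simpa [hlast, show v < c.len by omega] using c.idx_lt_succ v hlast
    · simp only [show v < c.len by omega, hlast, if_true, if_false]
      omega
  idx_last := by simp
  growth v hv := by
    by_cases hlast : v + 1 < c.len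
    · simpa [hlast, show v < c.len by omega] using c.growth v hlast
    · have hidx : c.idx v = k := c.idx_of_succ_eq_len (by omega)
      simp only [show v < c.len by omega, hlast, if_true, if_false, hidx]
      exact ⟨hgrowth, hnonneg⟩
  completion_of_le_first t ht := by
    simp only [c.len_pos, if_true] at ht ⊢
    rw [if_pos (ht.trans (c.idx_le c.len_pos))]
    exact c.completion_of_le_first t ht
  completion_of_mem_Ioc v hv t hlt hle := by
    by_cases hlast : v + 1 < c.len
    · simp only [hlast, show v < c.len by omega, if_true] at hlt hle ⊢
      rw [if_pos (hle.trans (c.idx_le hlast))]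
      exact c.completion_of_mem_Ioc v hlast t hlt hle
    · have hidx : c.idx v = k := c.idx_of_succ_eq_len (by omega)
      simp only [show v < c.len by omega, hlast, if_true, if_false, hidx] at hlt ⊢
      rw [if_neg (by omega)]
  approx t ht := by
    by_cases htk : t ≤ k
    · simpa only [htk, if_true] using c.approx t htk
    · simpa only [htk, if_false] using happrox t (by omega) ht

theorem nonempty {n : ℕ} (hmono : MonotoneOn a (Set.Iic n)) (hnonneg : ∀ t, t ≤ n → 0 ≤ a t)
    (hβ : 0 ≤ β) : ∀ j, j ≤ n → Nonempty (RepresentativeCover a β j) := by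
  classical
  intro j
  induction j using Nat.strong_induction_on with
  | _ j ih =>
    intro hj
    have hexists : ∃ t, a j ≤ (1 + β) * a t := ⟨j, by nlinarith [hnonneg j hj]⟩
    set f := Nat.find hexists
    have hfj : f ≤ j := Nat.find_min' hexists (by nlinarith [hnonneg j hj])
    have happrox : ∀ t, f ≤ t → t ≤ j → a t ≤ a j ∧ a j ≤ (1 + β) * a t := fun t hft htj =>
      have hj' : j ∈ Set.Iic n := hj
      have ht : t ∈ Set.Iic n := htj.trans hj
      ⟨hmono ht hj' htj, (Nat.find_spec hexists).trans <| mul_le_mul_of_nonneg_left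
        (hmono ((hft.trans htj).trans hj : f ≤ n) ht hft) (by linarith)⟩
    rcases Nat.eq_zero_or_pos f with hf | hf
    · exact ⟨single fun t htj => happrox t (by omega) htj⟩
    · have hkn : f - 1 ≤ n := by omega
      have hgap : (1 + β) * a (f - 1) < a j := not_le.mp (Nat.find_min hexists (by omega))
      obtain ⟨c⟩ := ih (f - 1) (by omega) hkn
      exact ⟨c.snoc (by omega) hgap.le (by nlinarith [hnonneg (f - 1) hkn])
        fun t hkt htj => happrox t (by omega) htj⟩

end RepresentativeCover

/-- For every nondecreasing array `a[0..n]` of nonnegative reals and every `β > 0`,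
there exist indices `idx 0 < idx 1 < ⋯ < idx (m-1) = n` such that the subsequence
`a (idx 0), …, a (idx (m-1))` is a `β`-RS, and its completion `A'` satisfies
`a t ≤ A' t ≤ (1+β) * a t` for all `0 ≤ t ≤ n`. -/
theorem stmt2 (n : ℕ) (a : ℕ → ℝ)
    (hmono : ∀ t, t + 1 ≤ n → a t ≤ a (t + 1))
    (hnonneg : ∀ t, t ≤ n → 0 ≤ a t)
    (β : ℝ) (hβ : 0 < β) :
    ∃ (m : ℕ) (idx : ℕ → ℕ) (A' : ℕ → ℝ),
      0 < m ∧
      (∀ v, v + 1 < m → idx v < idx (v + 1)) ∧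
      idx (m - 1) = n ∧
      (∀ v, v + 1 < m → (1 + β) * a (idx v) ≤ a (idx (v + 1)) ∧ 0 ≤ (1 + β) * a (idx v)) ∧
      (∀ t, t ≤ idx 0 → A' t = a (idx 0)) ∧
      (∀ v, v + 1 < m → ∀ t, idx v < t → t ≤ idx (v + 1) → A' t = a (idx (v + 1))) ∧
      (∀ t, t ≤ n → a t ≤ A' t ∧ A' t ≤ (1 + β) * a t) := by
  have hmonoOn : MonotoneOn a (Set.Iic n) :=
    monotoneOn_of_le_succ Set.ordConnected_Iic fun t _ _ ht => hmono t ht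
  obtain ⟨c⟩ := RepresentativeCover.nonempty hmonoOn hnonneg hβ.le n le_rfl
  exact ⟨c.len, c.idx, c.completion, c.len_pos, c.idx_lt_succ, c.idx_last, c.growth,
    c.completion_of_le_first, c.completion_of_mem_Ioc, c.approx⟩
end

section
/- Let 𝕄 be a nonempty family of subsets of {1,…,n}, let x : {1,…,n} → ℝ≥0, and set OPT = min_{Ω ∈ 𝕄} ∑_{i ∉ Ω} x_i. Let ε ∈ (0,1), let L ≥ 1 be a real number, and let W > 0 satisfy OPT ≤ W ≤ L·OPT. Define discretized weights x̂_i = ⌈x_i · n · L/(ε·W)⌉ when x_i ≤ W, and x̂_i = ⌈n·L/ε⌉ + n when x_i > W. If Ω̂ ∈ 𝕄 minimizes ∑_{i ∉ Ω} x̂_i over all Ω ∈ 𝕄, then ∑_{i ∉ Ω̂} x_i ≤ (1+ε)·OPT. -/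
/-!
Scale by `c = n L / (ε W)`. An optimal `Ω₀` has only light elements (weight `≤ OPT ≤ W`) outside
it, so its rounded cost is `< c OPT + n ≤ n L / ε + n`, strictly below the rounded weight of a
single heavy element. Hence `Ω̂` leaves out no heavy element either, and rounding up gives
`c ∑_{i ∉ Ω̂} x_i ≤ ∑_{i ∉ Ω̂} x̂_i ≤ ∑_{i ∉ Ω₀} x̂_i < c OPT + n`. Dividing by `c`, the additive
error `n / c = ε W / L` is at most `ε OPT`.
-/

open Finset

noncomputable def roundWeight (c W B t : ℝ) : ℝ :=
  if t ≤ W then ⌈c * t⌉ else B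

section roundWeight

variable {c W B t : ℝ}

lemma roundWeight_of_le (h : t ≤ W) : roundWeight c W B t = ⌈c * t⌉ := if_pos h

lemma roundWeight_of_lt (h : W < t) : roundWeight c W B t = B := if_neg h.not_ge

lemma roundWeight_nonneg (hc : 0 ≤ c) (hB : 0 ≤ B) (ht : 0 ≤ t) : 0 ≤ roundWeight c W B t := by
  unfold roundWeight
  split_ifs
  · exact_mod_cast Int.ceil_nonneg (mul_nonneg hc ht)
  · exact hB

lemma mul_le_roundWeight (h : t ≤ W) : c * t ≤ roundWeight c W B t :=
  (roundWeight_of_le h).symm ▸ Int.le_ceil _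

end roundWeight

lemma sum_ceil_mul_lt {ι : Type*} {s : Finset ι} (hs : s.Nonempty) (c : ℝ) (x : ι → ℝ) :
    ∑ i ∈ s, (⌈c * x i⌉ : ℝ) < c * ∑ i ∈ s, x i + #s := by
  calc ∑ i ∈ s, (⌈c * x i⌉ : ℝ) < ∑ i ∈ s, (c * x i + 1) :=
        sum_lt_sum_of_nonempty hs fun i _ => Int.ceil_lt_add_one _
    _ = c * ∑ i ∈ s, x i + #s := by
        rw [sum_add_distrib, ← mul_sum, sum_const, nsmul_eq_mul, mul_one]

section rounding

variable {ι : Type*} {x : ι → ℝ} {c W B : ℝ} {S T : Finset ι}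

lemma forall_le_of_sum_roundWeight_lt (hx : ∀ i, 0 ≤ x i) (hc : 0 ≤ c) (hB : 0 ≤ B)
    (hS : ∑ i ∈ S, roundWeight c W B (x i) < B) : ∀ i ∈ S, x i ≤ W := by
  intro i hi
  by_contra! hheavy
  have hsingle := single_le_sum (fun j _ => roundWeight_nonneg (W := W) hc hB (hx j)) hi
  rw [roundWeight_of_lt hheavy] at hsingle
  linarith

variable [Fintype ι]

lemma sum_roundWeight_lt_of_forall_le (hT : T.Nonempty) (hTW : ∀ i ∈ T, x i ≤ W) :
    ∑ i ∈ T, roundWeight c W B (x i) < c * ∑ i ∈ T, x i + Fintype.card ι := by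
  rw [sum_congr rfl fun i hi => roundWeight_of_le (hTW i hi)]
  have hcard : (#T : ℝ) ≤ Fintype.card ι := by exact_mod_cast card_le_univ T
  linarith [sum_ceil_mul_lt hT c x]

theorem sum_lt_add_of_sum_roundWeight_le (hx : ∀ i, 0 ≤ x i) (hc : 0 < c)
    (hB : c * W + Fintype.card ι ≤ B) (hT0 : 0 < ∑ i ∈ T, x i) (hTW : ∑ i ∈ T, x i ≤ W)
    (hST : ∑ i ∈ S, roundWeight c W B (x i) ≤ ∑ i ∈ T, roundWeight c W B (x i)) :
    ∑ i ∈ S, x i < ∑ i ∈ T, x i + Fintype.card ι / c := by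
  have hT : T.Nonempty := nonempty_of_sum_ne_zero hT0.ne'
  have hTlight : ∀ i ∈ T, x i ≤ W := fun i hi =>
    (single_le_sum (fun j _ => hx j) hi).trans hTW
  have hTcost := sum_roundWeight_lt_of_forall_le (B := B) (c := c) hT hTlight
  have hB0 : 0 ≤ B := by
    have : 0 ≤ c * W := mul_nonneg hc.le (hT0.le.trans hTW)
    linarith [(Fintype.card ι).cast_nonneg (α := ℝ)]
  have hSlight : ∀ i ∈ S, x i ≤ W := by
    refine forall_le_of_sum_roundWeight_lt hx hc.le hB0 ?_
    linarith [mul_le_mul_of_nonneg_left hTW hc.le]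
  have hScost : c * ∑ i ∈ S, x i ≤ ∑ i ∈ S, roundWeight c W B (x i) := by
    rw [mul_sum]
    exact sum_le_sum fun i hi => mul_le_roundWeight (hSlight i hi)
  rw [← sub_lt_iff_lt_add', lt_div_iff₀ hc]
  linarith

end rounding

theorem stmt4_general (n : ℕ) (𝕄 : Set (Finset (Fin n)))
    (x : Fin n → ℝ) (hx : ∀ i, 0 ≤ x i)
    (OPT : ℝ)
    (hOPT1 : ∃ Ω ∈ 𝕄, ∑ i ∈ Ωᶜ, x i = OPT)
    (ε : ℝ) (hε1 : 0 < ε)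
    (L : ℝ)
    (W : ℝ) (hW0 : 0 < W) (hW1 : OPT ≤ W) (hW2 : W ≤ L * OPT)
    (xh : Fin n → ℝ)
    (hxh : ∀ i, xh i = if x i ≤ W then (⌈x i * n * L / (ε * W)⌉ : ℝ)
      else (⌈(n : ℝ) * L / ε⌉ : ℝ) + n)
    (Ωh : Finset (Fin n))
    (hmin : ∀ Ω ∈ 𝕄, ∑ i ∈ Ωhᶜ, xh i ≤ ∑ i ∈ Ωᶜ, xh i) :
    ∑ i ∈ Ωhᶜ, x i ≤ (1 + ε) * OPT := by
  obtain ⟨Ω₀, hΩ₀, hΩ₀opt⟩ := hOPT1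
  have hOPT : 0 < OPT := by
    refine (hΩ₀opt ▸ sum_nonneg fun i _ => hx i).lt_of_ne ?_
    rintro rfl
    rw [mul_zero] at hW2
    linarith
  have hL : 0 < L := pos_of_mul_pos_left (hW0.trans_le hW2) hOPT.le
  have hn : 0 < n := (nonempty_of_sum_ne_zero (hΩ₀opt ▸ hOPT.ne')).choose.pos
  set c := n * L / (ε * W)
  have hc : 0 < c := by positivity
  have hxh' : ∀ i, xh i = roundWeight c W (⌈(n : ℝ) * L / ε⌉ + n) (x i) := fun i => by
    rw [hxh, roundWeight, show x i * n * L / (ε * W) = c * x i by ring]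
  have hB : c * W + Fintype.card (Fin n) ≤ (⌈(n : ℝ) * L / ε⌉ : ℝ) + n := by
    have : c * W = n * L / ε := by simp only [c]; field_simp
    rw [this, Fintype.card_fin]
    linarith [Int.le_ceil ((n : ℝ) * L / ε)]
  have hgap := sum_lt_add_of_sum_roundWeight_le hx hc hB (hΩ₀opt ▸ hOPT) (hΩ₀opt ▸ hW1)
    (by simpa only [hxh'] using hmin Ω₀ hΩ₀)
  rw [hΩ₀opt] at hgap
  have herr : (Fintype.card (Fin n) : ℝ) / c ≤ ε * OPT := by
    rw [Fintype.card_fin, show (n : ℝ) / c = ε * (W / L) by simp only [c]; field_simp]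
    exact mul_le_mul_of_nonneg_left ((div_le_iff₀ hL).2 (by linarith)) hε1.le
  linarith

/-- Let `𝕄` be a nonempty family of subsets of `{1,…,n}`, `x : {1,…,n} → ℝ≥0`,
and `OPT = min_{Ω ∈ 𝕄} ∑_{i ∉ Ω} x i`.  Let `ε ∈ (0,1)`, `L ≥ 1`, and `W > 0` with
`OPT ≤ W ≤ L * OPT`.  Define discretized weights `xh i = ⌈x i * n * L / (ε * W)⌉` when
`x i ≤ W`, and `xh i = ⌈n * L / ε⌉ + n` when `x i > W`.  If `Ωh ∈ 𝕄` minimizes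
`∑_{i ∉ Ω} xh i` over `𝕄`, then `∑_{i ∉ Ωh} x i ≤ (1+ε) * OPT`. -/
theorem stmt4 (n : ℕ) (𝕄 : Set (Finset (Fin n))) (h𝕄 : 𝕄.Nonempty)
    (x : Fin n → ℝ) (hx : ∀ i, 0 ≤ x i)
    (OPT : ℝ)
    (hOPT1 : ∃ Ω ∈ 𝕄, ∑ i ∈ Ωᶜ, x i = OPT)
    (hOPT2 : ∀ Ω ∈ 𝕄, OPT ≤ ∑ i ∈ Ωᶜ, x i)
    (ε : ℝ) (hε1 : 0 < ε) (hε2 : ε < 1)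
    (L : ℝ) (hL : 1 ≤ L)
    (W : ℝ) (hW0 : 0 < W) (hW1 : OPT ≤ W) (hW2 : W ≤ L * OPT)
    (xh : Fin n → ℝ)
    (hxh : ∀ i, xh i = if x i ≤ W then (⌈x i * n * L / (ε * W)⌉ : ℝ)
      else (⌈(n : ℝ) * L / ε⌉ : ℝ) + n)
    (Ωh : Finset (Fin n)) (hΩh : Ωh ∈ 𝕄)
    (hmin : ∀ Ω ∈ 𝕄, ∑ i ∈ Ωhᶜ, xh i ≤ ∑ i ∈ Ωᶜ, xh i) :
    ∑ i ∈ Ωhᶜ, x i ≤ (1 + ε) * OPT :=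
  stmt4_general n 𝕄 x hx OPT hOPT1 ε hε1 L W hW0 hW1 hW2 xh hxh Ωh hmin
end

section
/- Let T be the perfect binary tree with n = 2^D − 1 nodes (D ≥ 1) with nonnegative node weights, and let 1 ≤ k ≤ n. Suppose Ω is a rooted subtree of T with exactly k nodes such that u_v ≥ u_{v'} for every v ∈ Ω and every v' ∉ Ω (i.e., Ω consists of k nodes whose subtree weights are largest). Then ∑_{v ∉ Ω} x_v ≤ D · min_{Ω' ∈ 𝕋_k} ∑_{v ∉ Ω'} x_v. Moreover, such a rooted subtree Ω exists. -/
/-!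
Let `Ω` consist of `k` nodes of largest subtree weight and let `Ω'` be a rooted subtree with at
most `k` nodes. The tail of `Ω` exceeds the tail of `Ω'` by at most `∑_{v ∈ Ω' \ Ω} x_v`. Since
`#(Ω' \ Ω) ≤ #(Ω \ Ω')` and `x_v ≤ u_v ≤ u_w` for `v ∈ Ω' \ Ω`, `w ∈ Ω \ Ω'`, this excess is at most
`∑_{w ∈ Ω \ Ω'} u_w`. The nodes of `Ω \ Ω'` lie outside `Ω'`, hence below the root, on the `D - 1`
lower levels; on each level their subtrees are disjoint and avoid `Ω'`, so each level contributes
at most the tail of `Ω'`.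

Such an `Ω` exists: list the nodes by decreasing subtree weight, ties broken by heap index. A
parent has at least the weight of its child and a smaller index, so it comes first, and the first
`k` nodes form a rooted subtree.
-/

open scoped Classical

/-- Nodes of the perfect binary tree with `n` nodes are `1, …, n` in heap order: the root is `1`
and the parent of node `v ≥ 2` is `v / 2`.  A rooted subtree is a set of nodes containing the
root and closed under taking parents. -/
def isRootedSubtree (n : ℕ) (Ω : Finset ℕ) : Prop :=
  Ω ⊆ Finset.Icc 1 n ∧ 1 ∈ Ω ∧ ∀ v ∈ Ω, 2 ≤ v → v / 2 ∈ Ω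

/-- The subtree weight `u v`: the sum of the weights of all descendants of `v`
(`w` is a descendant of `v` iff `v` is obtained from `w` by iterated parent steps). -/
noncomputable def subtreeWeight (n : ℕ) (x : ℕ → ℝ) (v : ℕ) : ℝ :=
  ∑ w ∈ (Finset.Icc 1 n).filter (fun w => ∃ j : ℕ, w / 2 ^ j = v), x w

/-- The tail value of `Ω`: the total weight of the nodes outside `Ω`. -/
noncomputable def tailValue (n : ℕ) (x : ℕ → ℝ) (Ω : Finset ℕ) : ℝ :=
  ∑ v ∈ Finset.Icc 1 n \ Ω, x v

open Finset

theorem Finset.sum_le_sum_of_card_le_of_forall_le {ι κ : Type*} {s : Finset ι} {t : Finset κ}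
    {f : ι → ℝ} {g : κ → ℝ} (hcard : #s ≤ #t) (hfg : ∀ i ∈ s, ∀ j ∈ t, f i ≤ g j)
    (hg : ∀ j ∈ t, 0 ≤ g j) : ∑ i ∈ s, f i ≤ ∑ j ∈ t, g j := by
  rcases t.eq_empty_or_nonempty with rfl | ht
  · simp_all
  obtain ⟨j₀, hj₀, hmin⟩ := t.exists_min_image g ht
  calc ∑ i ∈ s, f i ≤ #s • g j₀ := sum_le_card_nsmul s f _ fun i hi => hfg i hi j₀ hj₀
    _ ≤ #t • g j₀ := nsmul_le_nsmul_left (hg j₀ hj₀) hcard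
    _ ≤ ∑ j ∈ t, g j := card_nsmul_le_sum t g _ hmin

theorem Finset.exists_subset_card_eq_forall_lt_mem {α β : Type*} [LinearOrder β] (key : α → β)
    (s : Finset α) {k : ℕ} (hk : k ≤ #s) :
    ∃ t ⊆ s, #t = k ∧ ∀ a ∈ t, ∀ b ∈ s, key b < key a → b ∈ t := by
  induction k with
  | zero => exact ⟨∅, empty_subset _, card_empty, by simp⟩
  | succ k ih =>
    obtain ⟨t, hts, htk, hlow⟩ := ih (by omega)
    have hrest : (s \ t).Nonempty := by
      rw [← card_pos, card_sdiff_of_subset hts]; omega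
    obtain ⟨m, hm, hmin⟩ := (s \ t).exists_min_image key hrest
    obtain ⟨hms, hmt⟩ := mem_sdiff.1 hm
    refine ⟨insert m t, insert_subset hms hts, by rw [card_insert_of_notMem hmt, htk], ?_⟩
    intro a ha b hb hba
    rcases mem_insert.1 ha with rfl | ha
    · by_contra hbt
      exact (hmin b (mem_sdiff.2 ⟨hb, fun h => hbt (mem_insert_of_mem h)⟩)).not_gt hba
    · exact mem_insert_of_mem (hlow a ha b hb hba)

theorem isRootedSubtree.div_pow_mem {n : ℕ} {Ω : Finset ℕ} (hΩ : isRootedSubtree n Ω) {w : ℕ}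
    (hw : w ∈ Ω) : ∀ j, 1 ≤ w / 2 ^ j → w / 2 ^ j ∈ Ω
  | 0, _ => by simpa using hw
  | j + 1, hj => by
    rw [pow_succ, ← Nat.div_div_eq_div_mul] at hj ⊢
    exact hΩ.2.2 _ (hΩ.div_pow_mem hw j (by omega)) (by omega)

namespace HeapTree

noncomputable def descendants (n v : ℕ) : Finset ℕ :=
  (Icc 1 n).filter (fun w => ∃ j : ℕ, w / 2 ^ j = v)

variable {n : ℕ} {x : ℕ → ℝ}

theorem subtreeWeight_eq_sum_descendants (v : ℕ) :
    subtreeWeight n x v = ∑ w ∈ descendants n v, x w := rfl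

theorem mem_descendants_self {v : ℕ} (hv : v ∈ Icc 1 n) : v ∈ descendants n v :=
  mem_filter.2 ⟨hv, 0, by simp⟩

theorem descendants_subset_descendants_div_two (v : ℕ) :
    descendants n v ⊆ descendants n (v / 2) := by
  intro w hw
  obtain ⟨hwn, j, rfl⟩ := mem_filter.1 hw
  exact mem_filter.2 ⟨hwn, j + 1, by rw [pow_succ, Nat.div_div_eq_div_mul]⟩

theorem self_le_subtreeWeight (hx : ∀ v, 0 ≤ x v) {v : ℕ} (hv : v ∈ Icc 1 n) :
    x v ≤ subtreeWeight n x v :=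
  single_le_sum (fun w _ => hx w) (mem_descendants_self hv)

theorem subtreeWeight_le_subtreeWeight_div_two (hx : ∀ v, 0 ≤ x v) (v : ℕ) :
    subtreeWeight n x v ≤ subtreeWeight n x (v / 2) :=
  sum_le_sum_of_subset_of_nonneg (descendants_subset_descendants_div_two v)
    fun w _ _ => hx w

theorem descendants_subset_sdiff {Ω : Finset ℕ} (hΩ : isRootedSubtree n Ω) {v : ℕ}
    (hv : 1 ≤ v) (hvΩ : v ∉ Ω) : descendants n v ⊆ Icc 1 n \ Ω := by
  intro w hw
  obtain ⟨hwn, j, rfl⟩ := mem_filter.1 hw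
  exact mem_sdiff.2 ⟨hwn, fun hwΩ => hvΩ (hΩ.div_pow_mem hwΩ j hv)⟩

/-- The level of a node `v` is `Nat.log 2 v`; a node `w` has exactly one ancestor `w / 2 ^ j`
on each level `Nat.log 2 w - j`. -/
theorem disjoint_descendants {v v' : ℕ} (hv : 1 ≤ v) (hv' : 1 ≤ v')
    (hlevel : Nat.log 2 v = Nat.log 2 v') (hne : v ≠ v') :
    Disjoint (descendants n v) (descendants n v') := by
  refine disjoint_left.2 fun w hw hw' => hne ?_
  obtain ⟨-, i, rfl⟩ := mem_filter.1 hw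
  obtain ⟨-, j, rfl⟩ := mem_filter.1 hw'
  have hi : i ≤ Nat.log 2 w := by
    by_contra! h
    rw [Nat.div_eq_of_lt (Nat.lt_pow_of_log_lt (by norm_num) h)] at hv
    omega
  have hj : j ≤ Nat.log 2 w := by
    by_contra! h
    rw [Nat.div_eq_of_lt (Nat.lt_pow_of_log_lt (by norm_num) h)] at hv'
    omega
  rw [Nat.log_div_base_pow, Nat.log_div_base_pow] at hlevel
  rw [show i = j by omega]

theorem sum_subtreeWeight_le_tailValue_of_level (hx : ∀ v, 0 ≤ x v) {Ω A : Finset ℕ}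
    (hΩ : isRootedSubtree n Ω) (hA : A ⊆ Icc 1 n \ Ω) {ℓ : ℕ}
    (hlevel : ∀ v ∈ A, Nat.log 2 v = ℓ) :
    ∑ v ∈ A, subtreeWeight n x v ≤ tailValue n x Ω := by
  have hpos : ∀ v ∈ A, 1 ≤ v := fun v hv => (mem_Icc.1 (mem_sdiff.1 (hA hv)).1).1
  have hdisj : (A : Set ℕ).PairwiseDisjoint (descendants n) := fun v hv v' hv' hne =>
    disjoint_descendants (hpos v hv) (hpos v' hv')
      ((hlevel v hv).trans (hlevel v' hv').symm) hne
  simp only [subtreeWeight_eq_sum_descendants, tailValue, ← sum_biUnion hdisj]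
  refine sum_le_sum_of_subset_of_nonneg ?_ fun w _ _ => hx w
  refine biUnion_subset.2 fun v hv => ?_
  exact descendants_subset_sdiff hΩ (hpos v hv) (mem_sdiff.1 (hA hv)).2

theorem sum_subtreeWeight_le_tailValue (hx : ∀ v, 0 ≤ x v) {D : ℕ} (hnD : n < 2 ^ D)
    {Ω S : Finset ℕ} (hΩ : isRootedSubtree n Ω) (hS : S ⊆ Icc 1 n \ Ω) :
    ∑ v ∈ S, subtreeWeight n x v ≤ (D - 1 : ℕ) * tailValue n x Ω := by
  have hlevel : ∀ v ∈ S, Nat.log 2 v ∈ Ico 1 D := by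
    intro v hv
    obtain ⟨hvn, hvΩ⟩ := mem_sdiff.1 (hS hv)
    obtain ⟨hv1, hvn⟩ := mem_Icc.1 hvn
    have hv2 : v ≠ 1 := by rintro rfl; exact hvΩ hΩ.2.1
    exact mem_Ico.2 ⟨Nat.le_log_of_pow_le (by norm_num) (by rw [pow_one]; omega),
      Nat.log_lt_of_lt_pow (by omega) (by omega)⟩
  rw [← sum_fiberwise_of_maps_to hlevel]
  calc ∑ ℓ ∈ Ico 1 D, ∑ v ∈ S with Nat.log 2 v = ℓ, subtreeWeight n x v
      ≤ ∑ _ℓ ∈ Ico 1 D, tailValue n x Ω := sum_le_sum fun ℓ _ =>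
        sum_subtreeWeight_le_tailValue_of_level hx hΩ ((filter_subset _ _).trans hS)
          fun v hv => (mem_filter.1 hv).2
    _ = (D - 1 : ℕ) * tailValue n x Ω := by rw [sum_const, Nat.card_Ico, nsmul_eq_mul]

theorem tailValue_le_sum_sdiff_add_tailValue (hx : ∀ v, 0 ≤ x v) (Ω Ω' : Finset ℕ) :
    tailValue n x Ω ≤ ∑ v ∈ Ω' \ Ω, x v + tailValue n x Ω' := by
  rw [tailValue, tailValue, ← sum_inter_add_sum_sdiff (Icc 1 n \ Ω) Ω']
  gcongr ?_ + ?_ <;> refine sum_le_sum_of_subset_of_nonneg ?_ fun v _ _ => hx v <;>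
    intro v <;> simp only [mem_inter, mem_sdiff] <;> tauto

theorem tailValue_le_mul_tailValue (hx : ∀ v, 0 ≤ x v) {D : ℕ} (hnD : n < 2 ^ D)
    {Ω Ω' : Finset ℕ} (hΩ : isRootedSubtree n Ω)
    (htop : ∀ v ∈ Ω, ∀ v' ∈ Icc 1 n, v' ∉ Ω → subtreeWeight n x v' ≤ subtreeWeight n x v)
    (hΩ' : isRootedSubtree n Ω') (hcard : #Ω' ≤ #Ω) :
    tailValue n x Ω ≤ D * tailValue n x Ω' := by
  have hD : 1 ≤ D := Nat.one_le_iff_ne_zero.2 fun hD0 => by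
    have := (mem_Icc.1 (hΩ.1 hΩ.2.1)).2
    simp only [hD0, pow_zero] at hnD
    omega
  have hgain : ∑ v ∈ Ω' \ Ω, x v ≤ ∑ v ∈ Ω \ Ω', subtreeWeight n x v := by
    calc ∑ v ∈ Ω' \ Ω, x v ≤ ∑ v ∈ Ω' \ Ω, subtreeWeight n x v :=
          sum_le_sum fun v hv => self_le_subtreeWeight hx (hΩ'.1 (mem_sdiff.1 hv).1)
      _ ≤ ∑ v ∈ Ω \ Ω', subtreeWeight n x v :=
          sum_le_sum_of_card_le_of_forall_le (card_sdiff_le_card_sdiff_iff.2 hcard)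
            (fun v' hv' v hv => htop v (mem_sdiff.1 hv).1 v' (hΩ'.1 (mem_sdiff.1 hv').1)
              (mem_sdiff.1 hv').2)
            fun v _ => sum_nonneg fun w _ => hx w
  have hloss : ∑ v ∈ Ω \ Ω', subtreeWeight n x v ≤ (D - 1 : ℕ) * tailValue n x Ω' :=
    sum_subtreeWeight_le_tailValue hx hnD hΩ' fun v hv =>
      mem_sdiff.2 ⟨hΩ.1 (mem_sdiff.1 hv).1, (mem_sdiff.1 hv).2⟩
  calc tailValue n x Ω ≤ ∑ v ∈ Ω' \ Ω, x v + tailValue n x Ω' :=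
        tailValue_le_sum_sdiff_add_tailValue hx Ω Ω'
    _ ≤ (D - 1 : ℕ) * tailValue n x Ω' + tailValue n x Ω' := by gcongr; linarith
    _ = D * tailValue n x Ω' := by rw [Nat.cast_sub hD]; ring

theorem exists_isRootedSubtree_top (hx : ∀ v, 0 ≤ x v) {k : ℕ} (hk1 : 1 ≤ k) (hkn : k ≤ n) :
    ∃ Ω : Finset ℕ, isRootedSubtree n Ω ∧ #Ω = k ∧
      ∀ v ∈ Ω, ∀ v' ∈ Icc 1 n, v' ∉ Ω → subtreeWeight n x v' ≤ subtreeWeight n x v := by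
  let key : ℕ → ℝ ×ₗ ℕ := fun v => toLex (-subtreeWeight n x v, v)
  obtain ⟨Ω, hΩ, hcard, hlow⟩ :=
    exists_subset_card_eq_forall_lt_mem key (Icc 1 n) (k := k) (by simpa using hkn)
  have hclosed : ∀ v ∈ Ω, 2 ≤ v → v / 2 ∈ Ω := by
    intro v hv hv2
    have hvn := mem_Icc.1 (hΩ hv)
    refine hlow v hv (v / 2) (mem_Icc.2 ⟨by omega, by omega⟩) (Prod.Lex.toLex_lt_toLex.2 ?_)
    rcases (subtreeWeight_le_subtreeWeight_div_two (n := n) hx v).lt_or_eq with h | h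
    · exact Or.inl (neg_lt_neg h)
    · exact Or.inr ⟨by rw [h], by omega⟩
  have hne : Ω.Nonempty := card_pos.1 (by omega)
  have hroot : Ω.min' hne = 1 := by
    have hmin := mem_Icc.1 (hΩ (Ω.min'_mem hne))
    by_contra h
    have := Ω.min'_le _ (hclosed _ (Ω.min'_mem hne) (by omega))
    omega
  refine ⟨Ω, ⟨hΩ, hroot ▸ Ω.min'_mem hne, hclosed⟩, hcard, ?_⟩
  · intro v hv v' hv' hv'Ω
    have := not_lt.1 (mt (hlow v hv v' hv') hv'Ω)
    rcases Prod.Lex.toLex_le_toLex.1 this with h | h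
    · linarith
    · linarith [h.1]

end HeapTree

theorem stmt5_general (D n : ℕ) (hn : n = 2 ^ D - 1)
    (x : ℕ → ℝ) (hx : ∀ v, 0 ≤ x v)
    (k : ℕ) (hk1 : 1 ≤ k) (hk2 : k ≤ n) :
    (∀ Ω : Finset ℕ, isRootedSubtree n Ω → Ω.card = k →
      (∀ v ∈ Ω, ∀ v' ∈ Finset.Icc 1 n, v' ∉ Ω →
        subtreeWeight n x v' ≤ subtreeWeight n x v) →
      ∀ Ω' : Finset ℕ, isRootedSubtree n Ω' → Ω'.card ≤ k →
        tailValue n x Ω ≤ (D : ℝ) * tailValue n x Ω') ∧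
    (∃ Ω : Finset ℕ, isRootedSubtree n Ω ∧ Ω.card = k ∧
      ∀ v ∈ Ω, ∀ v' ∈ Finset.Icc 1 n, v' ∉ Ω →
        subtreeWeight n x v' ≤ subtreeWeight n x v) := by
  have hnD : n < 2 ^ D := by
    have := Nat.one_le_two_pow (n := D)
    omega
  refine ⟨fun Ω hΩ hcard htop Ω' hΩ' hcard' => ?_, HeapTree.exists_isRootedSubtree_top hx hk1 hk2⟩
  exact HeapTree.tailValue_le_mul_tailValue hx hnD hΩ htop hΩ' (hcard ▸ hcard')

/-- In the perfect binary tree with `n = 2^D - 1` nodes (`D ≥ 1`) with nonnegative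
node weights, for `1 ≤ k ≤ n`: any rooted subtree `Ω` with exactly `k` nodes consisting of `k`
nodes of largest subtree weight satisfies
`∑_{v ∉ Ω} x v ≤ D * min_{Ω' ∈ 𝕋_k} ∑_{v ∉ Ω'} x v`; moreover such an `Ω` exists. -/
theorem stmt5 (D n : ℕ) (hD : 1 ≤ D) (hn : n = 2 ^ D - 1)
    (x : ℕ → ℝ) (hx : ∀ v, 0 ≤ x v)
    (k : ℕ) (hk1 : 1 ≤ k) (hk2 : k ≤ n) :
    (∀ Ω : Finset ℕ, isRootedSubtree n Ω → Ω.card = k →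
      (∀ v ∈ Ω, ∀ v' ∈ Finset.Icc 1 n, v' ∉ Ω →
        subtreeWeight n x v' ≤ subtreeWeight n x v) →
      ∀ Ω' : Finset ℕ, isRootedSubtree n Ω' → Ω'.card ≤ k →
        tailValue n x Ω ≤ (D : ℝ) * tailValue n x Ω') ∧
    (∃ Ω : Finset ℕ, isRootedSubtree n Ω ∧ Ω.card = k ∧
      ∀ v ∈ Ω, ∀ v' ∈ Finset.Icc 1 n, v' ∉ Ω →
        subtreeWeight n x v' ≤ subtreeWeight n x v) :=
  stmt5_general D n hn x hx k hk1 hk2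
end

section
/- Let 𝕄 be a nonempty family of subsets of {1,…,n}, each of size at most k (k ≥ 1 an integer), let x : {1,…,n} → ℝ≥0, and set OPT_H = max_{Ω ∈ 𝕄} ∑_{i ∈ Ω} x_i. Let ε ∈ (0,1) and let W be a real number with 0 < W ≤ OPT_H. Define x̂_i = ⌊k·x_i/(ε·W)⌋ for each i. If Ω̂ ∈ 𝕄 maximizes ∑_{i ∈ Ω} x̂_i over all Ω ∈ 𝕄, then ∑_{i ∈ Ω̂} x_i ≥ (1−ε)·OPT_H. -/
/-!
Rounding `x i` down to a multiple of `c = ε W / k` loses less than `c` per element, so a set of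
size at most `k` loses less than `ε W ≤ ε OPT_H` in total. Since `Ωh` is optimal for the rounded
weights, its true weight is at least `c` times the rounded weight of an optimal set, which is at least
`OPT_H - ε OPT_H`.
-/

open Finset

section RoundedWeights

variable {α ι : Type*} [Field α] [LinearOrder α] [IsOrderedRing α] [FloorRing α]

theorem sum_sub_card_mul_le_sum_floor_div_mul (s : Finset ι) (f : ι → α) {c : α} (hc : 0 < c) :
    ∑ i ∈ s, f i - #s * c ≤ (∑ i ∈ s, (⌊f i / c⌋ : α)) * c := by
  rw [← nsmul_eq_mul, ← sum_const, ← sum_sub_distrib, sum_mul]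
  exact sum_le_sum fun i _ => by linarith [Int.sub_floor_div_mul_lt (f i) hc]

theorem sum_floor_div_mul_le_sum (s : Finset ι) (f : ι → α) {c : α} (hc : 0 < c) :
    (∑ i ∈ s, (⌊f i / c⌋ : α)) * c ≤ ∑ i ∈ s, f i := by
  rw [sum_mul]
  exact sum_le_sum fun i _ => sub_nonneg.mp (Int.sub_floor_div_mul_nonneg (f i) hc)

theorem sum_sub_card_mul_le_of_sum_floor_div_le {s t : Finset ι} {f : ι → α} {c : α}
    (hc : 0 < c) (hst : ∑ i ∈ s, (⌊f i / c⌋ : α) ≤ ∑ i ∈ t, (⌊f i / c⌋ : α)) :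
    ∑ i ∈ s, f i - #s * c ≤ ∑ i ∈ t, f i :=
  calc ∑ i ∈ s, f i - #s * c ≤ (∑ i ∈ s, (⌊f i / c⌋ : α)) * c :=
        sum_sub_card_mul_le_sum_floor_div_mul s f hc
    _ ≤ (∑ i ∈ t, (⌊f i / c⌋ : α)) * c := mul_le_mul_of_nonneg_right hst hc.le
    _ ≤ ∑ i ∈ t, f i := sum_floor_div_mul_le_sum t f hc

end RoundedWeights

theorem stmt6_general (n k : ℕ) (hk : 1 ≤ k)
    (𝕄 : Set (Finset (Fin n)))
    (hcard : ∀ Ω ∈ 𝕄, Ω.card ≤ k)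
    (x : Fin n → ℝ)
    (OPTH : ℝ)
    (hOPT1 : ∃ Ω ∈ 𝕄, ∑ i ∈ Ω, x i = OPTH)
    (ε : ℝ) (hε1 : 0 < ε)
    (W : ℝ) (hW0 : 0 < W) (hW1 : W ≤ OPTH)
    (xh : Fin n → ℝ) (hxh : ∀ i, xh i = (⌊(k : ℝ) * x i / (ε * W)⌋ : ℝ))
    (Ωh : Finset (Fin n))
    (hmax : ∀ Ω ∈ 𝕄, ∑ i ∈ Ω, xh i ≤ ∑ i ∈ Ωh, xh i) :
    (1 - ε) * OPTH ≤ ∑ i ∈ Ωh, x i := by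
  obtain ⟨Ωopt, hΩopt, rfl⟩ := hOPT1
  have hk0 : (0 : ℝ) < k := by exact_mod_cast hk
  set c := ε * W / k
  have hc : 0 < c := by positivity
  have hxh_eq : ∀ i, xh i = (⌊x i / c⌋ : ℝ) := fun i => by
    rw [hxh, div_div_eq_mul_div, mul_comm]
  have hloss : #Ωopt * c ≤ ε * ∑ i ∈ Ωopt, x i :=
    calc #Ωopt * c ≤ k * c := by gcongr; exact_mod_cast hcard _ hΩopt
      _ = ε * W := mul_div_cancel₀ _ hk0.ne'
      _ ≤ ε * ∑ i ∈ Ωopt, x i := by gcongr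
  have hround := sum_sub_card_mul_le_of_sum_floor_div_le (s := Ωopt) (t := Ωh) hc
    (by simpa only [hxh_eq] using hmax _ hΩopt)
  linarith

/-- Let `𝕄` be a nonempty family of subsets of `{1,…,n}` of size at most `k`
(`k ≥ 1`), `x : {1,…,n} → ℝ≥0`, and `OPTH = max_{Ω ∈ 𝕄} ∑_{i ∈ Ω} x i`.  Let `ε ∈ (0,1)` and
`0 < W ≤ OPTH`.  Define `xh i = ⌊k * x i / (ε * W)⌋`.  If `Ωh ∈ 𝕄` maximizes
`∑_{i ∈ Ω} xh i` over `𝕄`, then `∑_{i ∈ Ωh} x i ≥ (1 - ε) * OPTH`. -/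
theorem stmt6 (n k : ℕ) (hk : 1 ≤ k)
    (𝕄 : Set (Finset (Fin n))) (h𝕄 : 𝕄.Nonempty)
    (hcard : ∀ Ω ∈ 𝕄, Ω.card ≤ k)
    (x : Fin n → ℝ) (hx : ∀ i, 0 ≤ x i)
    (OPTH : ℝ)
    (hOPT1 : ∃ Ω ∈ 𝕄, ∑ i ∈ Ω, x i = OPTH)
    (hOPT2 : ∀ Ω ∈ 𝕄, ∑ i ∈ Ω, x i ≤ OPTH)
    (ε : ℝ) (hε1 : 0 < ε) (hε2 : ε < 1)
    (W : ℝ) (hW0 : 0 < W) (hW1 : W ≤ OPTH)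
    (xh : Fin n → ℝ) (hxh : ∀ i, xh i = (⌊(k : ℝ) * x i / (ε * W)⌋ : ℝ))
    (Ωh : Finset (Fin n)) (hΩh : Ωh ∈ 𝕄)
    (hmax : ∀ Ω ∈ 𝕄, ∑ i ∈ Ω, xh i ≤ ∑ i ∈ Ωh, xh i) :
    (1 - ε) * OPTH ≤ ∑ i ∈ Ωh, x i :=
  stmt6_general n k hk 𝕄 hcard x OPTH hOPT1 ε hε1 W hW0 hW1 xh hxh Ωh hmax
end

section
/- Let T be the perfect binary tree with n = 2^D − 1 nodes (D ≥ 1) with nonnegative node weights, and let k be an integer with D ≤ k ≤ n. Let q = ⌊k/D⌋ and let Q be a set of q nodes such that x_v ≥ x_{v'} for every v ∈ Q and every v' ∉ Q (i.e., Q consists of q nodes of largest weight). Let Ω̂ be the set of all nodes lying on the path from the root to some node of Q, and let W = ∑_{v ∈ Ω̂} x_v. Then Ω̂ is a rooted subtree of T with at most k nodes, and W ≤ OPT_H ≤ (2D+1)·W, where OPT_H = max_{Ω ∈ 𝕋_k} ∑_{v ∈ Ω} x_v. -/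
/-!
`Ω̂` is the ancestor closure of `Q`. A node below `2 ^ D` has at most `D` ancestors, so
`|Ω̂| ≤ qD ≤ k`. For the approximation ratio let `m` be the smallest weight in `Q`. An optimal
subtree splits into its part inside `Ω̂`, of weight at most `W`, and at most `k` nodes outside `Q`,
each of weight at most `m`. Since `Q ⊆ Ω̂` we have `q m ≤ W`, and `k < (q + 1) D ≤ 2 q D`, hence
`OPT_H ≤ W + k m ≤ W + 2 D W`.
-/

open scoped Classical

open Finset

noncomputable def heapAncestors (n : ℕ) (Q : Finset ℕ) : Finset ℕ :=
  (Icc 1 n).filter fun v => ∃ w ∈ Q, ∃ j : ℕ, w / 2 ^ j = v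

lemma Nat.div_two_pow_log_two {w : ℕ} (hw : w ≠ 0) : w / 2 ^ Nat.log 2 w = 1 :=
  Nat.div_eq_of_lt_le (by simpa using Nat.pow_log_le_self 2 hw)
    (by simpa [pow_succ, mul_comm] using Nat.lt_pow_succ_log_self one_lt_two w)

lemma Nat.le_two_mul_div_mul {k D : ℕ} (hD : 0 < D) (hDk : D ≤ k) : k ≤ 2 * (k / D) * D := by
  have := Nat.lt_div_mul_add (a := k) hD
  have := Nat.div_pos hDk hD
  nlinarith

section heapAncestors

variable {n : ℕ} {Q : Finset ℕ}

lemma mem_heapAncestors {v : ℕ} :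
    v ∈ heapAncestors n Q ↔ v ∈ Icc 1 n ∧ ∃ w ∈ Q, ∃ j : ℕ, w / 2 ^ j = v :=
  mem_filter

lemma subset_heapAncestors (hQ : Q ⊆ Icc 1 n) : Q ⊆ heapAncestors n Q :=
  fun w hw => mem_heapAncestors.mpr ⟨hQ hw, w, hw, 0, by simp⟩

lemma isRootedSubtree_heapAncestors (hQ : Q ⊆ Icc 1 n) (hne : Q.Nonempty) :
    isRootedSubtree n (heapAncestors n Q) := by
  refine ⟨filter_subset _ _, ?_, ?_⟩
  · obtain ⟨w, hw⟩ := hne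
    have hwI := mem_Icc.mp (hQ hw)
    exact mem_heapAncestors.mpr
      ⟨mem_Icc.mpr ⟨le_rfl, by omega⟩, w, hw, _, Nat.div_two_pow_log_two (by omega)⟩
  · intro v hv hv2
    obtain ⟨hvI, w, hw, j, rfl⟩ := mem_heapAncestors.mp hv
    have := (mem_Icc.mp hvI).2
    exact mem_heapAncestors.mpr ⟨mem_Icc.mpr ⟨by omega, by omega⟩, w, hw, j + 1,
      by rw [pow_succ, Nat.div_div_eq_div_mul]⟩

lemma card_heapAncestors_le {D : ℕ} (hQ : ∀ w ∈ Q, w < 2 ^ D) :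
    #(heapAncestors n Q) ≤ #Q * D := by
  have hsub : heapAncestors n Q ⊆ Q.biUnion fun w => (range D).image (w / 2 ^ ·) := by
    intro v hv
    obtain ⟨hvI, w, hw, j, rfl⟩ := mem_heapAncestors.mp hv
    have hj : 2 ^ j ≤ w := (Nat.one_le_div_iff (by positivity)).mp (mem_Icc.mp hvI).1
    have hjD : j < D := (Nat.pow_lt_pow_iff_right one_lt_two).mp (hj.trans_lt (hQ w hw))
    exact mem_biUnion.mpr ⟨w, hw, mem_image.mpr ⟨j, mem_range.mpr hjD, rfl⟩⟩
  calc #(heapAncestors n Q) ≤ #(Q.biUnion fun w => (range D).image (w / 2 ^ ·)) :=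
        card_le_card hsub
    _ ≤ ∑ w ∈ Q, #((range D).image (w / 2 ^ ·)) := card_biUnion_le
    _ ≤ ∑ _w ∈ Q, D := sum_le_sum fun w _ => card_image_le.trans (card_range D).le
    _ = #Q * D := by rw [sum_const, smul_eq_mul]

end heapAncestors

lemma sum_le_sum_add_card_mul {α : Type*} [DecidableEq α] {x : α → ℝ} {Ω S : Finset α} {m : ℝ}
    (hx : ∀ v ∈ S, 0 ≤ x v) (hm0 : 0 ≤ m) (hm : ∀ v ∈ Ω \ S, x v ≤ m) :
    ∑ v ∈ Ω, x v ≤ ∑ v ∈ S, x v + #Ω * m :=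
  calc ∑ v ∈ Ω, x v = ∑ v ∈ Ω ∩ S, x v + ∑ v ∈ Ω \ S, x v := (sum_inter_add_sum_sdiff _ _ _).symm
    _ ≤ ∑ v ∈ S, x v + #(Ω \ S) * m :=
      add_le_add (sum_le_sum_of_subset_of_nonneg inter_subset_right fun v hv _ => hx v hv)
        (by simpa using sum_le_card_nsmul _ _ _ hm)
    _ ≤ ∑ v ∈ S, x v + #Ω * m := by gcongr; exact sdiff_subset

theorem stmt7_general (D n : ℕ) (hD : 1 ≤ D) (hn : n = 2 ^ D - 1)
    (x : ℕ → ℝ) (hx : ∀ v, 0 ≤ x v)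
    (k : ℕ) (hkD : D ≤ k)
    (q : ℕ) (hq : q = k / D)
    (Q : Finset ℕ) (hQsub : Q ⊆ Finset.Icc 1 n) (hQcard : Q.card = q)
    (hQbig : ∀ v ∈ Q, ∀ v' ∈ Finset.Icc 1 n, v' ∉ Q → x v' ≤ x v)
    (Ωh : Finset ℕ)
    (hΩh : Ωh = (Finset.Icc 1 n).filter (fun v => ∃ w ∈ Q, ∃ j : ℕ, w / 2 ^ j = v))
    (W : ℝ) (hW : W = ∑ v ∈ Ωh, x v)
    (OPTH : ℝ)
    (hOPTH : IsGreatest {t : ℝ | ∃ Ω : Finset ℕ, isRootedSubtree n Ω ∧ Ω.card ≤ k ∧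
      t = ∑ v ∈ Ω, x v} OPTH) :
    isRootedSubtree n Ωh ∧ Ωh.card ≤ k ∧ W ≤ OPTH ∧ OPTH ≤ (2 * (D : ℝ) + 1) * W := by
  obtain rfl : Ωh = heapAncestors n Q := hΩh
  subst hq
  have hQne : Q.Nonempty := card_pos.mp (hQcard ▸ Nat.div_pos hkD hD)
  have hQlt : ∀ w ∈ Q, w < 2 ^ D := fun w hw => by have := mem_Icc.mp (hQsub hw); omega
  have hsub := isRootedSubtree_heapAncestors hQsub hQne
  have hcard : #(heapAncestors n Q) ≤ k :=
    (card_heapAncestors_le hQlt).trans (hQcard ▸ Nat.div_mul_le_self k D)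
  refine ⟨hsub, hcard, hOPTH.2 ⟨_, hsub, hcard, hW⟩, ?_⟩
  obtain ⟨⟨Ω, hΩ, hΩk, rfl⟩, -⟩ := hOPTH
  obtain ⟨m, hmQ, hmin⟩ := Q.exists_min_image x hQne
  have hQW : ((k / D : ℕ) : ℝ) * x m ≤ W := by
    rw [← hQcard, hW]
    calc (#Q : ℝ) * x m ≤ ∑ v ∈ Q, x v := by simpa using card_nsmul_le_sum Q x _ hmin
      _ ≤ ∑ v ∈ heapAncestors n Q, x v :=
        sum_le_sum_of_subset_of_nonneg (subset_heapAncestors hQsub) fun v _ _ => hx v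
  have hout : ∀ v ∈ Ω \ heapAncestors n Q, x v ≤ x m := fun v hv =>
    hQbig m hmQ v (hΩ.1 (mem_sdiff.mp hv).1)
      fun hvQ => (mem_sdiff.mp hv).2 (subset_heapAncestors hQsub hvQ)
  have hk : (k : ℝ) ≤ 2 * ((k / D : ℕ) : ℝ) * D := by
    exact_mod_cast Nat.le_two_mul_div_mul hD hkD
  have hΩk' : (#Ω : ℝ) ≤ k := by exact_mod_cast hΩk
  calc ∑ v ∈ Ω, x v ≤ W + #Ω * x m := hW ▸ sum_le_sum_add_card_mul (fun v _ => hx v) (hx m) hout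
    _ ≤ W + 2 * D * (((k / D : ℕ) : ℝ) * x m) := by nlinarith [hx m]
    _ ≤ (2 * D + 1) * W := by nlinarith [hx m]

/-- In the perfect binary tree with `n = 2^D - 1` nodes (`D ≥ 1`) with nonnegative
weights, for an integer `D ≤ k ≤ n`, set `q = ⌊k / D⌋` and let `Q` be a set of `q` nodes of
largest weight.  Let `Ωh` consist of all nodes lying on the path from the root to some node of
`Q` (i.e. all ancestors of nodes of `Q`), and `W = ∑_{v ∈ Ωh} x v`.  Then `Ωh` is a rooted
subtree with at most `k` nodes and `W ≤ OPTH ≤ (2D+1) * W`, where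
`OPTH = max_{Ω ∈ 𝕋_k} ∑_{v ∈ Ω} x v`. -/
theorem stmt7 (D n : ℕ) (hD : 1 ≤ D) (hn : n = 2 ^ D - 1)
    (x : ℕ → ℝ) (hx : ∀ v, 0 ≤ x v)
    (k : ℕ) (hkD : D ≤ k) (hkn : k ≤ n)
    (q : ℕ) (hq : q = k / D)
    (Q : Finset ℕ) (hQsub : Q ⊆ Finset.Icc 1 n) (hQcard : Q.card = q)
    (hQbig : ∀ v ∈ Q, ∀ v' ∈ Finset.Icc 1 n, v' ∉ Q → x v' ≤ x v)
    (Ωh : Finset ℕ)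
    (hΩh : Ωh = (Finset.Icc 1 n).filter (fun v => ∃ w ∈ Q, ∃ j : ℕ, w / 2 ^ j = v))
    (W : ℝ) (hW : W = ∑ v ∈ Ωh, x v)
    (OPTH : ℝ)
    (hOPTH : IsGreatest {t : ℝ | ∃ Ω : Finset ℕ, isRootedSubtree n Ω ∧ Ω.card ≤ k ∧
      t = ∑ v ∈ Ω, x v} OPTH) :
    isRootedSubtree n Ωh ∧ Ωh.card ≤ k ∧ W ≤ OPTH ∧ OPTH ≤ (2 * (D : ℝ) + 1) * W :=
  stmt7_general D n hD hn x hx k hkD q hq Q hQsub hQcard hQbig Ωh hΩh W hW OPTH hOPTH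
end

section
/- Let h, w ≥ 1 be integers, let c(i,j) ≥ 0 be weights on {1,…,h} × {1,…,w}, let r be a path in the h × w grid, and let t be an integer with 1 ≤ t ≤ h−1. Define the paths ř(j) = min(r(j), t) and r̂(j) = max(r(j), t+1) for 1 ≤ j ≤ w. Then Δ(ř) + Δ(r̂) ≤ Δ(r) and Φ(ř) + Φ(r̂) ≥ Φ(r). -/
/-- The (support-)EMD of a path `r : {1,…,w} → {1,…,h}` in the `h × w` grid:
`Δ(r) = ∑_{j=1}^{w-1} |r (j+1) - r j|`. -/
def gridDelta (w : ℕ) (r : ℕ → ℕ) : ℤ :=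
  ∑ j ∈ Finset.Icc 1 (w - 1), |(r (j + 1) : ℤ) - (r j : ℤ)|

/-- The head value of a path `r` in the `h × w` grid with weights `c`:
`Φ(r) = ∑_{j=1}^{w} c (r j) j`. -/
def gridPhi (w : ℕ) (c : ℕ → ℕ → ℝ) (r : ℕ → ℕ) : ℝ :=
  ∑ j ∈ Finset.Icc 1 w, c (r j) j

/-! Cutting a path at height `t` splits each step `r j → r (j+1)` into its parts below and above
`t`; these move in the same direction and add up to the original step, so their lengths add up
to its length.  Cutting the upper part once more, at `t + 1`, can only shorten it.  For the head
value, each `r j` survives unchanged in one of the two cut paths, and the other term is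
nonnegative. -/

section

variable {α : Type*} [AddCommGroup α] [LinearOrder α] [IsOrderedAddMonoid α]

theorem abs_min_sub_min_add_abs_max_sub_max (a b c : α) :
    |min a c - min b c| + |max a c - max b c| = |a - b| := by
  rcases le_total a c with hac | hca <;> rcases le_total b c with hbc | hcb <;>
    simp only [min_eq_left, min_eq_right, max_eq_left, max_eq_right, sub_self, abs_zero,
      zero_add, add_zero, *]
  · rw [abs_of_nonpos (sub_nonpos.2 hac), abs_of_nonpos (sub_nonpos.2 hcb),
      abs_of_nonpos (sub_nonpos.2 (hac.trans hcb))]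
    abel
  · rw [abs_of_nonneg (sub_nonneg.2 hbc), abs_of_nonneg (sub_nonneg.2 hca),
      abs_of_nonneg (sub_nonneg.2 (hbc.trans hca))]
    abel

theorem abs_min_sub_min_add_abs_max_sub_max_le {s t : α} (hst : s ≤ t) (a b : α) :
    |min a s - min b s| + |max a t - max b t| ≤ |a - b| := by
  calc |min a s - min b s| + |max a t - max b t|
      = |min a s - min b s| + |max (max a s) t - max (max b s) t| := by
        rw [max_assoc, max_eq_right hst, max_assoc, max_eq_right hst]
    _ ≤ |min a s - min b s| + |max a s - max b s| :=
        add_le_add_right (abs_max_sub_max_le_abs _ _ _) _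
    _ = |a - b| := abs_min_sub_min_add_abs_max_sub_max a b s

end

theorem gridDelta_min_add_gridDelta_max_le (w : ℕ) (r : ℕ → ℕ) {s t : ℕ} (hst : s ≤ t) :
    gridDelta w (fun j => min (r j) s) + gridDelta w (fun j => max (r j) t) ≤ gridDelta w r := by
  rw [gridDelta, gridDelta, gridDelta, ← Finset.sum_add_distrib]
  refine Finset.sum_le_sum fun j _ => ?_
  push_cast
  exact abs_min_sub_min_add_abs_max_sub_max_le (Int.ofNat_le.2 hst) _ _

theorem gridPhi_le_gridPhi_min_add_gridPhi_max (w : ℕ) {c : ℕ → ℕ → ℝ}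
    (hc : ∀ i j, 0 ≤ c i j) (r : ℕ → ℕ) (t : ℕ) :
    gridPhi w c r ≤
      gridPhi w c (fun j => min (r j) t) + gridPhi w c (fun j => max (r j) (t + 1)) := by
  rw [gridPhi, gridPhi, gridPhi, ← Finset.sum_add_distrib]
  refine Finset.sum_le_sum fun j _ => ?_
  rcases le_or_gt (r j) t with hle | hgt
  · rw [min_eq_left hle]
    exact le_add_of_nonneg_right (hc _ _)
  · rw [max_eq_left (Nat.succ_le_of_lt hgt)]
    exact le_add_of_nonneg_left (hc _ _)

theorem stmt11_general (w : ℕ)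
    (c : ℕ → ℕ → ℝ) (hc : ∀ i j, 0 ≤ c i j)
    (r : ℕ → ℕ)
    (t : ℕ) :
    gridDelta w (fun j => min (r j) t) + gridDelta w (fun j => max (r j) (t + 1)) ≤
      gridDelta w r ∧
    gridPhi w c r ≤
      gridPhi w c (fun j => min (r j) t) + gridPhi w c (fun j => max (r j) (t + 1)) :=
  ⟨gridDelta_min_add_gridDelta_max_le w r t.le_succ,
    gridPhi_le_gridPhi_min_add_gridPhi_max w hc r t⟩

/-- Let `h, w ≥ 1`, `c ≥ 0` weights on the grid, `r` a path in the `h × w` grid,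
and `1 ≤ t ≤ h - 1`.  With `ř j = min (r j) t` and `r̂ j = max (r j) (t+1)`, one has
`Δ(ř) + Δ(r̂) ≤ Δ(r)` and `Φ(ř) + Φ(r̂) ≥ Φ(r)`. -/
theorem stmt11 (h w : ℕ) (hh : 1 ≤ h) (hw : 1 ≤ w)
    (c : ℕ → ℕ → ℝ) (hc : ∀ i j, 0 ≤ c i j)
    (r : ℕ → ℕ) (hr : ∀ j, 1 ≤ j → j ≤ w → 1 ≤ r j ∧ r j ≤ h)
    (t : ℕ) (ht1 : 1 ≤ t) (ht2 : t ≤ h - 1) :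
    gridDelta w (fun j => min (r j) t) + gridDelta w (fun j => max (r j) (t + 1)) ≤
      gridDelta w r ∧
    gridPhi w c r ≤
      gridPhi w c (fun j => min (r j) t) + gridPhi w c (fun j => max (r j) (t + 1)) :=
  stmt11_general w c hc r t
end

section
/- Let h, w ≥ 1 be integers, let c(i,j) ≥ 0 be weights on {1,…,h} × {1,…,w}, let r be a path in the h × w grid, and let d ≥ 1 be an integer. Then there exists a path r' in the h × w grid such that Δ(r') ≤ Δ(r)/d and Φ(r') ≥ Φ(r)/(2d). -/
/-!
Let `T j` be the EMD of `r` up to column `j`, so `T w = Δ(r)`. Cutting the columns according to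
`⌊d · T j / (T w + 1)⌋` gives `d` blocks, and one of them carries at least `Φ(r)/d` of the head
value. Between the first and last column `a ≤ b` of that block the path moves by
`T b - T a ≤ Δ(r)/d`, and freezing `r` outside `[a, b]` keeps this motion and the head value of
the block while adding no further EMD.
-/

open Finset

def segmentDelta (r : ℕ → ℕ) (a b : ℕ) : ℤ :=
  ∑ j ∈ Ico a b, |(r (j + 1) : ℤ) - r j|

def clamp (a b j : ℕ) : ℕ := max a (min j b)

theorem Int.sub_lt_of_ediv_eq {q x y : ℤ} (hq : 0 < q) (h : x / q = y / q) : y - x < q := by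
  have hx := Int.ediv_mul_le x hq.ne'
  have hy := Int.lt_ediv_add_one_mul_self y hq
  rw [← h] at hy
  linarith

section segmentDelta

variable (r : ℕ → ℕ)

theorem gridDelta_eq_segmentDelta (w : ℕ) : gridDelta w r = segmentDelta r 1 w := by
  unfold gridDelta segmentDelta
  rw [show Icc 1 (w - 1) = Ico 1 w by ext; simp only [mem_Icc, mem_Ico]; omega]

theorem segmentDelta_nonneg (a b : ℕ) : 0 ≤ segmentDelta r a b :=
  sum_nonneg fun _ _ => abs_nonneg _

variable {r}

theorem segmentDelta_add {a b c : ℕ} (hab : a ≤ b) (hbc : b ≤ c) :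
    segmentDelta r a b + segmentDelta r b c = segmentDelta r a c :=
  sum_Ico_consecutive _ hab hbc

theorem segmentDelta_mono_right {a b c : ℕ} (hab : a ≤ b) (hbc : b ≤ c) :
    segmentDelta r a b ≤ segmentDelta r a c := by
  rw [← segmentDelta_add hab hbc]
  linarith [segmentDelta_nonneg r b c]

variable (r)

theorem gridDelta_comp_clamp {a b w : ℕ} (ha : 1 ≤ a) (hab : a ≤ b) (hbw : b ≤ w) :
    gridDelta w (r ∘ clamp a b) = segmentDelta r a b := by
  have hflat : ∀ j, j + 1 ≤ a ∨ b ≤ j →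
      |((r ∘ clamp a b) (j + 1) : ℤ) - (r ∘ clamp a b) j| = 0 := fun j hj => by
    simp only [Function.comp, clamp, show max a (min (j + 1) b) = max a (min j b) by omega,
      sub_self, abs_zero]
  have hleft : segmentDelta (r ∘ clamp a b) 1 a = 0 :=
    sum_eq_zero fun j hj => hflat j (Or.inl (mem_Ico.1 hj).2)
  have hright : segmentDelta (r ∘ clamp a b) b w = 0 :=
    sum_eq_zero fun j hj => hflat j (Or.inr (mem_Ico.1 hj).1)
  have hmiddle : segmentDelta (r ∘ clamp a b) a b = segmentDelta r a b := by
    refine sum_congr rfl fun j hj => ?_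
    rw [mem_Ico] at hj
    simp only [Function.comp, clamp, show max a (min (j + 1) b) = j + 1 by omega,
      show max a (min j b) = j by omega]
  rw [gridDelta_eq_segmentDelta, ← segmentDelta_add ha (hab.trans hbw),
    ← segmentDelta_add hab hbw, hleft, hright, hmiddle, zero_add, add_zero]

end segmentDelta

theorem exists_short_heavy_Icc {w d : ℕ} (hw : 1 ≤ w) (hd : 0 < d)
    {φ : ℕ → ℝ} (hφ : ∀ j, 0 ≤ φ j) {T : ℕ → ℤ} {N : ℤ}
    (hT : ∀ j ∈ Icc 1 w, 0 ≤ T j ∧ T j ≤ N) :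
    ∃ a b, 1 ≤ a ∧ a ≤ b ∧ b ≤ w ∧ d * (T b - T a) ≤ N ∧
      (∑ j ∈ Icc 1 w, φ j) / d ≤ ∑ j ∈ Icc a b, φ j := by
  have hT1 := hT 1 (by simp [hw])
  have hN : 0 ≤ N := hT1.1.trans hT1.2
  have hd' : (0 : ℝ) < d := by exact_mod_cast hd
  -- dividing by `N + 1` rather than `N` keeps every index below `d`, also when `N = 0`
  set block : ℕ → ℤ := fun j => d * T j / (N + 1)
  have hmaps : ∀ j ∈ Icc 1 w, block j ∈ Ico (0 : ℤ) d := by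
    intro j hj
    obtain ⟨hT0, hTN⟩ := hT j hj
    rw [mem_Ico]
    refine ⟨Int.ediv_nonneg (by positivity) (by omega), (Int.ediv_lt_iff_lt_mul (by omega)).2 ?_⟩
    nlinarith
  have hcard : #(Ico (0 : ℤ) d) = d := by simp
  obtain ⟨k, -, hk⟩ := exists_le_sum_fiber_of_maps_to_of_nsmul_le_sum hmaps
    (b := (∑ j ∈ Icc 1 w, φ j) / d) (nonempty_Ico.2 (by exact_mod_cast hd))
    (by rw [hcard, nsmul_eq_mul, mul_div_cancel₀ _ hd'.ne'])
  set F := {j ∈ Icc 1 w | block j = k}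
  rcases F.eq_empty_or_nonempty with hF | hF
  · rw [hF, sum_empty] at hk
    exact ⟨1, 1, le_rfl, le_rfl, hw, by simpa using hN, hk.trans (sum_nonneg fun j _ => hφ j)⟩
  · have ha := mem_filter.1 (F.min'_mem hF)
    have hb := mem_filter.1 (F.max'_mem hF)
    rw [mem_Icc] at ha hb
    refine ⟨F.min' hF, F.max' hF, ha.1.1, F.min'_le _ (F.max'_mem hF), hb.1.2, ?_, ?_⟩
    · have := Int.sub_lt_of_ediv_eq (by omega : 0 < N + 1) (ha.2.trans hb.2.symm)
      linarith
    · refine hk.trans (sum_le_sum_of_subset_of_nonneg (fun j hj => ?_) fun j _ _ => hφ j)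
      exact mem_Icc.2 ⟨F.min'_le j hj, F.le_max' j hj⟩

theorem stmt12_general (h w : ℕ) (hw : 1 ≤ w)
    (c : ℕ → ℕ → ℝ) (hc : ∀ i j, 0 ≤ c i j)
    (r : ℕ → ℕ) (hr : ∀ j, 1 ≤ j → j ≤ w → 1 ≤ r j ∧ r j ≤ h)
    (d : ℕ) (hd : 1 ≤ d) :
    ∃ r' : ℕ → ℕ, (∀ j, 1 ≤ j → j ≤ w → 1 ≤ r' j ∧ r' j ≤ h) ∧
      (gridDelta w r' : ℝ) ≤ (gridDelta w r : ℝ) / d ∧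
      gridPhi w c r / (2 * d) ≤ gridPhi w c r' := by
  have hd' : (0 : ℝ) < d := by exact_mod_cast hd
  obtain ⟨a, b, ha, hab, hbw, hshort, hheavy⟩ :=
    exists_short_heavy_Icc (φ := fun j => c (r j) j) (T := segmentDelta r 1)
      (N := gridDelta w r) hw hd (fun j => hc _ _) fun j hj =>
        ⟨segmentDelta_nonneg r 1 j, by
          rw [gridDelta_eq_segmentDelta]
          exact segmentDelta_mono_right (mem_Icc.1 hj).1 (mem_Icc.1 hj).2⟩
  refine ⟨r ∘ clamp a b, fun j _ _ => hr _ (by unfold clamp; omega) (by unfold clamp; omega),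
    ?_, ?_⟩
  · rw [← segmentDelta_add ha hab, add_sub_cancel_left] at hshort
    rw [gridDelta_comp_clamp r ha hab hbw, le_div_iff₀ hd', mul_comm]
    exact_mod_cast hshort
  · calc gridPhi w c r / (2 * d)
        ≤ gridPhi w c r / d :=
          div_le_div_of_nonneg_left (sum_nonneg fun _ _ => hc _ _) hd' (by linarith)
      _ ≤ ∑ j ∈ Icc a b, c (r j) j := hheavy
      _ = ∑ j ∈ Icc a b, c ((r ∘ clamp a b) j) j := sum_congr rfl fun j hj => by
          rw [mem_Icc] at hj
          simp only [Function.comp, clamp, show max a (min j b) = j by omega]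
      _ ≤ gridPhi w c (r ∘ clamp a b) :=
          sum_le_sum_of_subset_of_nonneg (Icc_subset_Icc ha hbw) fun _ _ _ => hc _ _

/-- Let `h, w ≥ 1`, `c ≥ 0` weights on the grid, `r` a path in the `h × w` grid,
and `d ≥ 1` an integer.  Then there is a path `r'` in the `h × w` grid with
`Δ(r') ≤ Δ(r) / d` and `Φ(r') ≥ Φ(r) / (2d)`. -/
theorem stmt12 (h w : ℕ) (hh : 1 ≤ h) (hw : 1 ≤ w)
    (c : ℕ → ℕ → ℝ) (hc : ∀ i j, 0 ≤ c i j)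
    (r : ℕ → ℕ) (hr : ∀ j, 1 ≤ j → j ≤ w → 1 ≤ r j ∧ r j ≤ h)
    (d : ℕ) (hd : 1 ≤ d) :
    ∃ r' : ℕ → ℕ, (∀ j, 1 ≤ j → j ≤ w → 1 ≤ r' j ∧ r' j ≤ h) ∧
      (gridDelta w r' : ℝ) ≤ (gridDelta w r : ℝ) / d ∧
      gridPhi w c r / (2 * d) ≤ gridPhi w c r' :=
  stmt12_general h w hw c hc r hr d hd
end

section
/- Let Ω be a column-s-sparse support in the h × w grid, let B > 0 be a real number, and let d = ⌊EMD[Ω]/B⌋. Then there exists a column-s-sparse support Ω' with EMD[Ω'] ≤ B and Φ[Ω'] ≥ Φ[Ω]/(2(d+1)). -/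
/-- `EMD(A, B)` for two finite sets of naturals: the minimum over bijections `π : A → B` of
`∑_{a ∈ A} |a - π a|` (by convention `sInf ∅ = 0` if no bijection exists). -/
noncomputable def setEMD (A B : Finset ℕ) : ℕ :=
  sInf {t : ℕ | ∃ e : {x // x ∈ A} ≃ {y // y ∈ B},
    t = ∑ a ∈ A.attach, ((a.1 : ℤ) - ((e a).1 : ℤ)).natAbs}

/-- The support of column `j` of `Ω ⊆ {1,…,h} × {1,…,w}`. -/
def colSet (Ω : Finset (ℕ × ℕ)) (j : ℕ) : Finset ℕ :=
  (Ω.filter (fun p => p.2 = j)).image Prod.fst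

/-- `Ω` is a column-`s`-sparse support in the `h × w` grid: it lies in the grid and each of its
`w` columns has exactly `s` elements. -/
def colSparse (h w s : ℕ) (Ω : Finset (ℕ × ℕ)) : Prop :=
  Ω ⊆ Finset.Icc 1 h ×ˢ Finset.Icc 1 w ∧ ∀ j ∈ Finset.Icc 1 w, (colSet Ω j).card = s

/-- `EMD[Ω] = ∑_{j=1}^{w-1} EMD(Ω_j, Ω_{j+1})`. -/
noncomputable def suppEMD (w : ℕ) (Ω : Finset (ℕ × ℕ)) : ℕ :=
  ∑ j ∈ Finset.Icc 1 (w - 1), setEMD (colSet Ω j) (colSet Ω (j + 1))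

/-- The head value `Φ[Ω] = ∑_{(i,j) ∈ Ω} c i j`. -/
def headVal (c : ℕ → ℕ → ℝ) (Ω : Finset (ℕ × ℕ)) : ℝ :=
  ∑ p ∈ Ω, c p.1 p.2

/-!
Let `P j` be the EMD accumulated between columns `1` and `j`, and group the columns by
`⌊P j / B⌋`; since `P` is monotone with `P w = EMD[Ω]`, there are at most `d + 1` groups, so one
group carries at least `Φ[Ω] / (d + 1)` of the head value. If that group spans the columns
`a ≤ b`, then `P b - P a < B`. Keep the columns `a, …, b` of `Ω` and fill columns left of `a`
with copies of column `a` and columns right of `b` with copies of column `b`: the copies add no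
EMD, so the new support has EMD at most `P b - P a < B`, and it keeps the whole group.
-/

open Finset

lemma setEMD_self (A : Finset ℕ) : setEMD A A = 0 :=
  Nat.sInf_eq_zero.mpr <| Or.inl ⟨Equiv.refl _, by simp⟩

lemma mem_colSet {Ω : Finset (ℕ × ℕ)} {i j : ℕ} : i ∈ colSet Ω j ↔ (i, j) ∈ Ω := by
  simp [colSet]

def colWeight (c : ℕ → ℕ → ℝ) (Ω : Finset (ℕ × ℕ)) (j : ℕ) : ℝ :=
  ∑ i ∈ colSet Ω j, c i j

lemma headVal_nonneg {c : ℕ → ℕ → ℝ} (hc : ∀ i j, 0 ≤ c i j) (Ω : Finset (ℕ × ℕ)) :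
    0 ≤ headVal c Ω :=
  sum_nonneg fun _ _ => hc _ _

lemma colWeight_nonneg {c : ℕ → ℕ → ℝ} (hc : ∀ i j, 0 ≤ c i j) (Ω : Finset (ℕ × ℕ)) (j : ℕ) :
    0 ≤ colWeight c Ω j :=
  sum_nonneg fun _ _ => hc _ _

lemma headVal_eq_sum_colWeight (c : ℕ → ℕ → ℝ) {Ω : Finset (ℕ × ℕ)} {J : Finset ℕ}
    (hΩ : ∀ p ∈ Ω, p.2 ∈ J) : headVal c Ω = ∑ j ∈ J, colWeight c Ω j := by
  rw [headVal, ← sum_fiberwise_of_maps_to hΩ]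
  refine sum_congr rfl fun j _ => ?_
  rw [colWeight, colSet, sum_image fun x hx y hy hxy =>
    Prod.ext hxy ((mem_filter.mp hx).2.trans (mem_filter.mp hy).2.symm)]
  exact sum_congr rfl fun p hp => by rw [(mem_filter.mp hp).2]

noncomputable def prefixEMD (Ω : Finset (ℕ × ℕ)) (j : ℕ) : ℕ :=
  ∑ k ∈ Ico 1 j, setEMD (colSet Ω k) (colSet Ω (k + 1))

lemma suppEMD_eq_prefixEMD (w : ℕ) (Ω : Finset (ℕ × ℕ)) : suppEMD w Ω = prefixEMD Ω w := by
  refine sum_congr ?_ fun _ _ => rfl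
  ext k
  simp only [mem_Icc, mem_Ico]
  omega

lemma prefixEMD_mono (Ω : Finset (ℕ × ℕ)) : Monotone (prefixEMD Ω) :=
  fun _ _ hjk => sum_le_sum_of_subset (Ico_subset_Ico le_rfl hjk)

def clampCols (Ω : Finset (ℕ × ℕ)) (w a b : ℕ) : Finset (ℕ × ℕ) :=
  (Icc 1 w).biUnion fun j => (colSet Ω (min b (max a j))).image fun i => (i, j)

section clampCols

variable {Ω : Finset (ℕ × ℕ)} {w a b : ℕ}

lemma colSet_clampCols {j : ℕ} (hj : j ∈ Icc 1 w) :
    colSet (clampCols Ω w a b) j = colSet Ω (min b (max a j)) := by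
  ext i
  simp only [mem_colSet, clampCols, mem_biUnion, mem_image, Prod.mk.injEq]
  constructor
  · rintro ⟨j', -, i', hi', rfl, rfl⟩
    exact hi'
  · exact fun hi => ⟨j, hj, i, hi, rfl, rfl⟩

lemma colSparse_clampCols {h s : ℕ} (hΩ : colSparse h w s Ω) (ha : 1 ≤ a) (hab : a ≤ b)
    (hbw : b ≤ w) : colSparse h w s (clampCols Ω w a b) := by
  constructor
  · intro p hp
    obtain ⟨j, hj, i, hi, rfl⟩ := by simpa only [clampCols, mem_biUnion, mem_image] using hp
    exact mem_product.mpr ⟨(mem_product.mp (hΩ.1 (mem_colSet.mp hi))).1, hj⟩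
  · intro j hj
    rw [colSet_clampCols hj]
    exact hΩ.2 _ (by simp only [mem_Icc]; omega)

lemma setEMD_colSet_clampCols_le {j : ℕ} (hj : j ∈ Icc 1 (w - 1)) :
    setEMD (colSet (clampCols Ω w a b) j) (colSet (clampCols Ω w a b) (j + 1)) ≤
      if j ∈ Ico a b then setEMD (colSet Ω j) (colSet Ω (j + 1)) else 0 := by
  simp only [mem_Icc] at hj
  rw [colSet_clampCols (by simp only [mem_Icc]; omega),
    colSet_clampCols (by simp only [mem_Icc]; omega)]
  by_cases hwin : j ∈ Ico a b
  · have hmem := mem_Ico.mp hwin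
    rw [if_pos hwin, show min b (max a j) = j by omega, show min b (max a (j + 1)) = j + 1 by omega]
  · rw [show min b (max a (j + 1)) = min b (max a j) by simp only [mem_Ico] at hwin; omega,
      setEMD_self]
    exact Nat.zero_le _

lemma suppEMD_clampCols_add_prefixEMD_le (ha : 1 ≤ a) (hab : a ≤ b) :
    suppEMD w (clampCols Ω w a b) + prefixEMD Ω a ≤ prefixEMD Ω b := by
  rw [prefixEMD, prefixEMD, ← sum_Ico_consecutive _ ha hab, add_comm]
  gcongr
  calc suppEMD w (clampCols Ω w a b)
      ≤ ∑ j ∈ Icc 1 (w - 1), if j ∈ Ico a b then setEMD (colSet Ω j) (colSet Ω (j + 1)) else 0 :=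
        sum_le_sum fun j hj => setEMD_colSet_clampCols_le hj
    _ = ∑ j ∈ Icc 1 (w - 1) with j ∈ Ico a b, setEMD (colSet Ω j) (colSet Ω (j + 1)) :=
        (sum_filter _ _).symm
    _ ≤ _ := sum_le_sum_of_subset fun j hj => (mem_filter.mp hj).2

lemma sum_colWeight_le_headVal_clampCols {c : ℕ → ℕ → ℝ} (hc : ∀ i j, 0 ≤ c i j) (ha : 1 ≤ a)
    (hbw : b ≤ w) : ∑ j ∈ Icc a b, colWeight c Ω j ≤ headVal c (clampCols Ω w a b) := by
  have hcols : ∀ p ∈ clampCols Ω w a b, p.2 ∈ Icc 1 w := by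
    intro p hp
    obtain ⟨j, hj, i, -, rfl⟩ := by simpa only [clampCols, mem_biUnion, mem_image] using hp
    exact hj
  rw [headVal_eq_sum_colWeight c hcols]
  calc ∑ j ∈ Icc a b, colWeight c Ω j
      = ∑ j ∈ Icc a b, colWeight c (clampCols Ω w a b) j := by
        refine sum_congr rfl fun j hj => ?_
        have hj := mem_Icc.mp hj
        rw [colWeight, colWeight, colSet_clampCols (by simp only [mem_Icc]; omega),
          show min b (max a j) = j by omega]
    _ ≤ ∑ j ∈ Icc 1 w, colWeight c (clampCols Ω w a b) j :=
        sum_le_sum_of_subset_of_nonneg (Icc_subset_Icc ha hbw)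
          fun j _ _ => colWeight_nonneg hc _ j

end clampCols

lemma lt_add_of_floor_div_eq {x y B : ℝ} (hx : 0 ≤ x) (hB : 0 < B)
    (hxy : ⌊x / B⌋₊ = ⌊y / B⌋₊) : y < x + B := by
  have hlow : (⌊x / B⌋₊ : ℝ) * B ≤ x := (le_div_iff₀ hB).mp (Nat.floor_le (by positivity))
  have hhigh : y < (⌊y / B⌋₊ + 1 : ℝ) * B := (div_lt_iff₀ hB).mp (Nat.lt_floor_add_one _)
  rw [← hxy] at hhigh
  linarith

lemma exists_colSparse_suppEMD_le_of_window {h w s : ℕ} {c : ℕ → ℕ → ℝ} (hc : ∀ i j, 0 ≤ c i j)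
    {Ω : Finset (ℕ × ℕ)} (hΩ : colSparse h w s Ω) {B : ℝ} {a b : ℕ} (ha : 1 ≤ a) (hab : a ≤ b)
    (hbw : b ≤ w) (hwindow : (prefixEMD Ω b : ℝ) < prefixEMD Ω a + B) :
    ∃ Ω' : Finset (ℕ × ℕ), colSparse h w s Ω' ∧ (suppEMD w Ω' : ℝ) ≤ B ∧
      ∑ j ∈ Icc a b, colWeight c Ω j ≤ headVal c Ω' := by
  refine ⟨clampCols Ω w a b, colSparse_clampCols hΩ ha hab hbw, ?_,
    sum_colWeight_le_headVal_clampCols hc ha hbw⟩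
  have hEMD : (suppEMD w (clampCols Ω w a b) : ℝ) + prefixEMD Ω a ≤ prefixEMD Ω b := by
    exact_mod_cast suppEMD_clampCols_add_prefixEMD_le ha hab
  linarith

lemma exists_heavy_window {w : ℕ} (hw : 1 ≤ w) {c : ℕ → ℕ → ℝ} (hc : ∀ i j, 0 ≤ c i j)
    {Ω : Finset (ℕ × ℕ)} (hΩ : ∀ p ∈ Ω, p.2 ∈ Icc 1 w) {B : ℝ} (hB : 0 < B) :
    ∃ a b, 1 ≤ a ∧ a ≤ b ∧ b ≤ w ∧ (prefixEMD Ω b : ℝ) < prefixEMD Ω a + B ∧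
      headVal c Ω / (⌊(suppEMD w Ω : ℝ) / B⌋₊ + 1) ≤ ∑ j ∈ Icc a b, colWeight c Ω j := by
  set level : ℕ → ℕ := fun j => ⌊(prefixEMD Ω j : ℝ) / B⌋₊
  have hlevels : #((Icc 1 w).image level) ≤ ⌊(suppEMD w Ω : ℝ) / B⌋₊ + 1 := by
    refine (card_le_card fun v hv => ?_).trans (card_range _).le
    obtain ⟨j, hj, rfl⟩ := mem_image.mp hv
    rw [mem_range, Nat.lt_succ_iff, suppEMD_eq_prefixEMD]
    exact Nat.floor_le_floor (by gcongr; exact prefixEMD_mono Ω (mem_Icc.mp hj).2)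
  obtain ⟨v, hv, hheavy⟩ := exists_le_sum_fiber_of_maps_to_of_nsmul_le_sum
    (fun j hj => mem_image_of_mem level hj) ((nonempty_Icc.mpr hw).image level)
    (b := headVal c Ω / (⌊(suppEMD w Ω : ℝ) / B⌋₊ + 1)) (by
      rw [nsmul_eq_mul, ← headVal_eq_sum_colWeight c hΩ, mul_div_left_comm]
      exact mul_le_of_le_one_right (headVal_nonneg hc Ω) <|
        (div_le_one (by positivity)).mpr (by exact_mod_cast hlevels))
  obtain ⟨j, hj, rfl⟩ := mem_image.mp hv
  set S := (Icc 1 w).filter fun k => level k = level j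
  have hSne : S.Nonempty := ⟨j, mem_filter.mpr ⟨hj, rfl⟩⟩
  have ha := mem_filter.mp (S.min'_mem hSne)
  have hb := mem_filter.mp (S.max'_mem hSne)
  refine ⟨S.min' hSne, S.max' hSne, (mem_Icc.mp ha.1).1, S.min'_le _ (S.max'_mem hSne),
    (mem_Icc.mp hb.1).2, lt_add_of_floor_div_eq (Nat.cast_nonneg _) hB (ha.2.trans hb.2.symm),
    hheavy.trans ?_⟩
  exact sum_le_sum_of_subset_of_nonneg (fun k hk => mem_Icc.mpr ⟨S.min'_le k hk, S.le_max' k hk⟩)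
    fun k _ _ => colWeight_nonneg hc Ω k

theorem stmt13_general (h w s : ℕ) (hw : 1 ≤ w)
    (c : ℕ → ℕ → ℝ) (hc : ∀ i j, 0 ≤ c i j)
    (Ω : Finset (ℕ × ℕ)) (hΩ : colSparse h w s Ω)
    (B : ℝ) (hB : 0 < B)
    (d : ℕ) (hd : d = ⌊(suppEMD w Ω : ℝ) / B⌋₊) :
    ∃ Ω' : Finset (ℕ × ℕ), colSparse h w s Ω' ∧ (suppEMD w Ω' : ℝ) ≤ B ∧
      headVal c Ω / (2 * (d + 1)) ≤ headVal c Ω' := by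
  obtain ⟨a, b, ha, hab, hbw, hwindow, hheavy⟩ :=
    exists_heavy_window hw hc (fun p hp => (mem_product.mp (hΩ.1 hp)).2) hB
  obtain ⟨Ω', hΩ', hEMD, hhead⟩ := exists_colSparse_suppEMD_le_of_window hc hΩ ha hab hbw hwindow
  refine ⟨Ω', hΩ', hEMD, ?_⟩
  calc headVal c Ω / (2 * (d + 1))
      ≤ headVal c Ω / (d + 1) :=
        div_le_div_of_nonneg_left (headVal_nonneg hc Ω) (by positivity) (by linarith)
    _ ≤ headVal c Ω' := hd ▸ hheavy.trans hhead

/-- Let `Ω` be a column-`s`-sparse support in the `h × w` grid, `B > 0`, and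
`d = ⌊EMD[Ω] / B⌋`.  Then there is a column-`s`-sparse support `Ω'` with `EMD[Ω'] ≤ B` and
`Φ[Ω'] ≥ Φ[Ω] / (2 (d + 1))`. -/
theorem stmt13 (h w s : ℕ) (hs1 : 1 ≤ s) (hsh : s ≤ h) (hw : 1 ≤ w)
    (c : ℕ → ℕ → ℝ) (hc : ∀ i j, 0 ≤ c i j)
    (Ω : Finset (ℕ × ℕ)) (hΩ : colSparse h w s Ω)
    (B : ℝ) (hB : 0 < B)
    (d : ℕ) (hd : d = ⌊(suppEMD w Ω : ℝ) / B⌋₊) :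
    ∃ Ω' : Finset (ℕ × ℕ), colSparse h w s Ω' ∧ (suppEMD w Ω' : ℝ) ≤ B ∧
      headVal c Ω / (2 * (d + 1)) ≤ headVal c Ω' :=
  stmt13_general h w s hw c hc Ω hΩ B hB d hd
end
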